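/- Let R be a monoid (or associative unital ring), let k ≥ 2, let e_0, e_1, …, e_{k−2} ∈ R satisfy e_i e_j = e_j e_i whenever |i−j| ≥ 2, and let x_1, …, x_k ∈ R satisfy x_i e_j = e_j x_i for every i and every j ≥ 1. Then the two 'staircase' words coincide: x_1 e_0 x_2 e_{1,0} x_3 e_{2,0} x_4 ⋯ x_{k−1} e_{k−2,0} x_k = x_1 e_{0,k−2} x_2 e_{0,k−3} x_3 ⋯ x_{k−2} e_{0,1} x_{k−1} e_0 x_k, where e_{n,0} = e_n e_{n−1} ⋯ e_0 is the descending product and e_{0,m} = e_0 e_1 ⋯ e_m is the ascending product. -/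

import Mathlib

/-- The ordered product `e_{n,m}`: ascending `e_n e_{n+1} ⋯ e_m` if `n ≤ m`,
descending `e_n e_{n-1} ⋯ e_m` if `n > m` (and just `e_n` when `n = m`). -/
def eInterval {R : Type*} [Monoid R] (e : ℕ → R) (n m : ℕ) : R :=
  if n ≤ m then ((List.range (m - n + 1)).map (fun i => e (n + i))).prod
  else ((List.range (n - m + 1)).map (fun i => e (n - i))).prod

namespace Staircase

variable {R : Type*} [Monoid R]

/-- ascending product `e 0 * e 1 * ⋯ * e n` -/
def asc (e : ℕ → R) (n : ℕ) : R := ((List.range (n+1)).map e).prod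

/-- descending product `e n * ⋯ * e 1 * e 0` -/
def desc (e : ℕ → R) (n : ℕ) : R := ((List.range (n+1)).map (fun i => e (n - i))).prod

lemma asc_zero (e : ℕ → R) : asc e 0 = e 0 := by simp [asc, List.range_succ]

lemma desc_zero (e : ℕ → R) : desc e 0 = e 0 := by simp [desc, List.range_succ]

lemma asc_succ (e : ℕ → R) (n : ℕ) : asc e (n+1) = asc e n * e (n+1) := by
  simp [asc, List.range_succ, mul_assoc]

lemma desc_succ (e : ℕ → R) (n : ℕ) : desc e (n+1) = e (n+1) * desc e n := by
  have h : List.range (n+1+1) = 0 :: (List.range (n+1)).map Nat.succ :=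
    List.range_succ_eq_map
  rw [desc, h]
  simp only [List.map_cons, List.map_map, List.prod_cons, Nat.sub_zero]
  congr 2
  ext i
  simp [Function.comp, Nat.succ_sub_succ]

lemma asc_congr {e f : ℕ → R} {n : ℕ} (h : ∀ i ≤ n, e i = f i) : asc e n = asc f n := by
  unfold asc
  congr 1
  apply List.map_congr_left
  intro i hi
  rw [List.mem_range] at hi
  exact h i (by omega)

lemma desc_congr {e f : ℕ → R} {n : ℕ} (h : ∀ i ≤ n, e i = f i) : desc e n = desc f n := by
  unfold desc
  congr 1
  apply List.map_congr_left
  intro i hi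
  exact h (n - i) (by omega)

lemma eInterval_to_desc (e : ℕ → R) (n : ℕ) : eInterval e n 0 = desc e n := by
  rcases n with _ | m
  · simp [eInterval, desc, List.range_succ]
  · rw [eInterval, if_neg (by omega)]
    simp [desc]

lemma eInterval_to_asc (e : ℕ → R) (m : ℕ) : eInterval e 0 m = asc e m := by
  rw [eInterval, if_pos (Nat.zero_le m)]
  simp [asc]

lemma commute_asc {e : ℕ → R} (he : ∀ i j, i + 2 ≤ j → e i * e j = e j * e i)
    {m n : ℕ} (h : n + 2 ≤ m) : Commute (e m) (asc e n) := by
  apply Commute.list_prod_right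
  intro y hy
  simp only [List.mem_map, List.mem_range] at hy
  obtain ⟨i, hi, rfl⟩ := hy
  exact ((he i m (by omega)).symm : Commute (e m) (e i))

/-- `T e x n = (asc e n * x 0) * (asc e (n-1) * x 1) * ⋯ * (asc e 0 * x n)` -/
def T (e x : ℕ → R) (n : ℕ) : R :=
  ((List.range (n+1)).map (fun j => asc e (n - j) * x j)).prod

lemma T_zero (e x : ℕ → R) : T e x 0 = e 0 * x 0 := by
  simp [T, asc_zero, List.range_succ]

lemma commute_T {e x : ℕ → R} (he : ∀ i j, i + 2 ≤ j → e i * e j = e j * e i)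
    (hx : ∀ i j, 1 ≤ j → x i * e j = e j * x i)
    {m n : ℕ} (h : n + 2 ≤ m) : Commute (e m) (T e x n) := by
  apply Commute.list_prod_right
  intro y hy
  simp only [List.mem_map, List.mem_range] at hy
  obtain ⟨i, hi, rfl⟩ := hy
  exact Commute.mul_right (commute_asc he (by omega))
    ((hx i m (by omega)).symm : Commute (e m) (x i))

lemma T_succ {e x : ℕ → R} (n : ℕ) (h0 : x 0 * e (n+1) = e (n+1) * x 0) :
    T e x (n+1) = asc e n * x 0 * (e (n+1) * T e (fun j => x (j+1)) n) := by
  have h : List.range (n+1+1) = 0 :: (List.range (n+1)).map Nat.succ :=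
    List.range_succ_eq_map
  rw [T, h]
  simp only [List.map_cons, List.map_map, List.prod_cons, Nat.sub_zero]
  have htail : (List.range (n+1)).map ((fun j => asc e (n + 1 - j) * x j) ∘ Nat.succ)
      = (List.range (n+1)).map (fun j => asc e (n - j) * x (j+1)) := by
    apply List.map_congr_left
    intro i hi
    simp [Function.comp, Nat.succ_sub_succ]
  rw [htail, asc_succ, mul_assoc (asc e n) (e (n+1)) (x 0),
    show e (n+1) * x 0 = x 0 * e (n+1) from h0.symm]
  simp only [mul_assoc]
  rfl

lemma T_split {e : ℕ → R} (he : ∀ i j, i + 2 ≤ j → e i * e j = e j * e i) :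
    ∀ (n : ℕ) (x : ℕ → R), (∀ i j, 1 ≤ j → x i * e j = e j * x i) →
      T e x (n+1) = T e x n * desc e (n+1) * x (n+1) := by
  intro n
  induction n with
  | zero =>
    intro x hx
    rw [T_succ 0 (hx 0 1 le_rfl), T_zero, T_zero, asc_zero]
    rw [show desc e 1 = e 1 * desc e 0 from desc_succ e 0, desc_zero]
    simp only [mul_assoc]
  | succ n ih =>
    intro x hx
    have hx' : ∀ i j, 1 ≤ j → (fun j => x (j+1)) i * e j = e j * (fun j => x (j+1)) i :=
      fun i j hj => hx (i+1) j hj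
    have h1 : T e x (n+2) = asc e (n+1) * x 0 * (e (n+2) * T e (fun j => x (j+1)) (n+1)) :=
      T_succ (n+1) (hx 0 (n+2) (by omega))
    have h2 : T e (fun j => x (j+1)) (n+1)
        = T e (fun j => x (j+1)) n * desc e (n+1) * x (n+2) :=
      ih (fun j => x (j+1)) hx'
    have h3 : T e x (n+1) = asc e n * x 0 * (e (n+1) * T e (fun j => x (j+1)) n) :=
      T_succ n (hx 0 (n+1) (by omega))
    have h4 : desc e (n+2) = e (n+2) * desc e (n+1) := desc_succ e (n+1)
    have h5 : asc e (n+1) = asc e n * e (n+1) := asc_succ e n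
    have hc : e (n+2) * T e (fun j => x (j+1)) n = T e (fun j => x (j+1)) n * e (n+2) :=
      (commute_T he hx' (by omega)).eq
    have h0' : e (n+1) * x 0 = x 0 * e (n+1) := (hx 0 (n+1) (by omega)).symm
    rw [h1, h2, h3, h4, h5]
    simp only [mul_assoc]
    rw [← mul_assoc (e (n+2)) (T e (fun j => x (j+1)) n), hc,
      mul_assoc (T e (fun j => x (j+1)) n)]
    rw [← mul_assoc (e (n+1)) (x 0), h0', mul_assoc (x 0) (e (n+1))]

lemma stair {e x : ℕ → R} (he : ∀ i j, i + 2 ≤ j → e i * e j = e j * e i)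
    (hx : ∀ i j, 1 ≤ j → x i * e j = e j * x i) (n : ℕ) :
    ((List.range (n+1)).map (fun j => desc e j * x (j+2))).prod
      = T e (fun j => x (j+2)) n := by
  induction n with
  | zero => simp [T, desc_zero, asc_zero, List.range_succ]
  | succ n ih =>
    have hx'' : ∀ i j, 1 ≤ j → (fun j => x (j+2)) i * e j = e j * (fun j => x (j+2)) i :=
      fun i j hj => hx (i+2) j hj
    rw [List.range_succ, List.map_append, List.prod_append, ih,
      T_split he n (fun j => x (j+2)) hx'']
    simp [mul_assoc]

end Staircase

/-- Equation (2.12) of the paper: in a monoid `R`, if `e_0, …, e_{k−2}` commute at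
distance `≥ 2` and each `x_i` (for `1 ≤ i ≤ k`) commutes with every `e_j` for `j ≥ 1`,
then the two staircase words coincide:
`x_1 e_0 x_2 e_{1,0} x_3 ⋯ x_{k−1} e_{k−2,0} x_k
  = x_1 e_{0,k−2} x_2 e_{0,k−3} x_3 ⋯ x_{k−2} e_{0,1} x_{k−1} e_0 x_k`. -/
theorem staircase_words_eq {R : Type*} [Monoid R] (k : ℕ) (hk : 2 ≤ k)
    (e x : ℕ → R)
    (hcomm : ∀ i j : ℕ, i ≤ k - 2 → j ≤ k - 2 → (i + 2 ≤ j ∨ j + 2 ≤ i) →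
      e i * e j = e j * e i)
    (hx : ∀ i j : ℕ, 1 ≤ i → i ≤ k → 1 ≤ j → j ≤ k - 2 →
      x i * e j = e j * x i) :
    x 1 * ((List.range (k - 1)).map (fun j => eInterval e j 0 * x (j + 2))).prod =
      x 1 * ((List.range (k - 1)).map
        (fun j => eInterval e 0 (k - 2 - j) * x (j + 2))).prod := by
  set e' : ℕ → R := fun i => if i ≤ k - 2 then e i else 1 with he'def
  set x' : ℕ → R := fun i => if 1 ≤ i ∧ i ≤ k then x i else 1 with hx'def
  have he' : ∀ i j, i + 2 ≤ j → e' i * e' j = e' j * e' i := by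
    intro i j hij
    simp only [he'def]
    split_ifs with h1 h2 h2
    · exact hcomm i j h1 h2 (Or.inl hij)
    all_goals simp
  have hx' : ∀ i j, 1 ≤ j → x' i * e' j = e' j * x' i := by
    intro i j hj
    simp only [hx'def, he'def]
    split_ifs with h1 h2 h2
    · exact hx i j h1.1 h1.2 hj h2
    all_goals simp
  have hk1 : k - 1 = (k - 2) + 1 := by omega
  rw [hk1]
  have hL : (List.range ((k-2)+1)).map (fun j => eInterval e j 0 * x (j + 2))
      = (List.range ((k-2)+1)).map (fun j => Staircase.desc e' j * x' (j + 2)) := by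
    apply List.map_congr_left
    intro j hj
    rw [List.mem_range] at hj
    rw [Staircase.eInterval_to_desc]
    congr 1
    · exact Staircase.desc_congr (fun i hi => by
        simp only [he'def]
        rw [if_pos (by omega)])
    · simp only [hx'def]
      rw [if_pos ⟨by omega, by omega⟩]
  have hR : (List.range ((k-2)+1)).map (fun j => eInterval e 0 (k - 2 - j) * x (j + 2))
      = (List.range ((k-2)+1)).map (fun j => Staircase.asc e' ((k-2) - j) * x' (j + 2)) := by
    apply List.map_congr_left
    intro j hj
    rw [List.mem_range] at hj
    rw [Staircase.eInterval_to_asc]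
    congr 1
    · exact Staircase.asc_congr (fun i hi => by
        simp only [he'def]
        rw [if_pos (by omega)])
    · simp only [hx'def]
      rw [if_pos ⟨by omega, by omega⟩]
  rw [hL, hR]
  congr 1
  have := Staircase.stair he' hx' (k - 2)
  rw [this]
  rfl
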